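/- Let 𝒳 = {X₁,…,X_s} be a factorization of a digraph G and let W be a resolving set of G. Then the set {X_i ∈ 𝒳 : W ∩ X_i ≠ ∅} is a resolving set of the quotient digraph G/𝒳. -/

import Mathlib

/-!
A walk in `G` projects to a walk in `G/𝒳` that is no longer, by dropping the arcs inside a
module. Conversely, since every outside vertex sees a module uniformly, an arc `X_i → X_j` of
the quotient gives an arc between *any* representatives, so a quotient walk between distinct
modules lifts to a walk of the same length between arbitrary representatives. Hence the distance
between distinct modules equals the distance between any of their representatives. If `s ∈ W`
lies in `X_k` and distinguishes `u ∈ X_i` from `v ∈ X_j`, then `X_k` distinguishes `X_i` from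
`X_j`: either `k ∈ {i, j}` and the distances are `0` and nonzero, or both quotient distances are
the distances from `s` in `G`.
-/

open Classical

variable {V : Type*}

/-- There is a directed walk of length `m` from `x` to `y` in the digraph with arc relation `A`. -/
def HasDWalk {V : Type*} (A : V → V → Prop) (x y : V) (m : ℕ) : Prop :=
  ∃ f : Fin (m + 1) → V, f 0 = x ∧ f (Fin.last m) = y ∧
    ∀ i : Fin m, A (f i.castSucc) (f i.succ)

/-- `y` is reachable from `x` by a directed path. -/
def DReachable {V : Type*} (A : V → V → Prop) (x y : V) : Prop :=
  ∃ m : ℕ, HasDWalk A x y m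

/-- Directed distance: length of a shortest directed path, `⊤` if none exists. -/
noncomputable def ddist {V : Type*} (A : V → V → Prop) (x y : V) : ℕ∞ :=
  sInf {n : ℕ∞ | ∃ m : ℕ, n = (m : ℕ∞) ∧ HasDWalk A x y m}

/-- A resolving set: every vertex is reachable from the set, and every pair of
distinct vertices is distinguished by distance from some vertex of the set. -/
def IsResolvingSet {V : Type*} (A : V → V → Prop) (S : Set V) : Prop :=
  (∀ v : V, ∃ s ∈ S, DReachable A s v) ∧
  ∀ v w : V, v ≠ w → ∃ s ∈ S, ddist A s v ≠ ddist A s w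

/-- `X` is a module: every vertex outside `X` relates uniformly to all vertices of `X`. -/
def IsModule {V : Type*} (A : V → V → Prop) (X : Set V) : Prop :=
  ∀ v ∉ X, ∀ x ∈ X, ∀ y ∈ X, (A v x ↔ A v y) ∧ (A x v ↔ A y v)

/-- A factorization: a partition of the vertex set into (nonempty) modules. -/
def IsFactorization {V ι : Type*} (A : V → V → Prop) (X : ι → Set V) : Prop :=
  (∀ i, (X i).Nonempty) ∧ (Pairwise fun i j => Disjoint (X i) (X j)) ∧
  (⋃ i, X i) = Set.univ ∧ ∀ i, IsModule A (X i)

/-- The quotient digraph of a factorization: an arc from module `i` to module `j`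
(`i ≠ j`) iff there is an arc from a vertex of `X i` to a vertex of `X j`. -/
def quotientAdj {V ι : Type*} (A : V → V → Prop) (X : ι → Set V) (i j : ι) : Prop :=
  i ≠ j ∧ ∃ x ∈ X i, ∃ y ∈ X j, A x y

section Walks

variable {V' : Type*} {A : V → V → Prop}

theorem hasDWalk_zero_iff {x y : V} : HasDWalk A x y 0 ↔ x = y := by
  constructor
  · rintro ⟨f, rfl, rfl, -⟩
    rfl
  · rintro rfl
    exact ⟨fun _ => x, rfl, rfl, fun i => i.elim0⟩

theorem hasDWalk_succ_iff {x z : V} {m : ℕ} :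
    HasDWalk A x z (m + 1) ↔ ∃ y, A x y ∧ HasDWalk A y z m := by
  constructor
  · rintro ⟨f, rfl, rfl, hf⟩
    refine ⟨f 1, hf 0, Fin.tail f, rfl, by simp [Fin.tail], fun i => ?_⟩
    simpa only [Fin.tail, Fin.succ_castSucc] using hf i.succ
  · rintro ⟨y, hxy, g, rfl, rfl, hg⟩
    refine ⟨Fin.cons x g, rfl, by simp [← Fin.succ_last], fun i => ?_⟩
    induction i using Fin.cases with
    | zero => simpa using hxy
    | succ i => simpa [← Fin.succ_castSucc] using hg i

theorem ddist_le_of_hasDWalk {x y : V} {m : ℕ} (h : HasDWalk A x y m) : ddist A x y ≤ m :=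
  sInf_le ⟨m, rfl, h⟩

theorem ddist_eq_zero_iff {x y : V} : ddist A x y = 0 ↔ x = y := by
  refine ⟨fun h => ?_, fun h => nonpos_iff_eq_zero.mp
    (ddist_le_of_hasDWalk (hasDWalk_zero_iff.mpr h))⟩
  by_contra hxy
  have : (1 : ℕ∞) ≤ ddist A x y := by
    refine le_sInf ?_
    rintro _ ⟨_ | m, rfl, hw⟩
    · exact absurd (hasDWalk_zero_iff.mp hw) hxy
    · exact_mod_cast m.succ_pos
  simp [h] at this

theorem ddist_le_ddist_of_forall_hasDWalk {B : V' → V' → Prop} {x y : V} {x' y' : V'}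
    (h : ∀ m, HasDWalk A x y m → ∃ m' ≤ m, HasDWalk B x' y' m') :
    ddist B x' y' ≤ ddist A x y := by
  refine le_sInf ?_
  rintro _ ⟨m, rfl, hw⟩
  obtain ⟨m', hm', hw'⟩ := h m hw
  exact (ddist_le_of_hasDWalk hw').trans (by exact_mod_cast hm')

end Walks

section Lifting

variable {ι : Type*} {A : V → V → Prop} {B : ι → ι → Prop}

theorem HasDWalk.exists_map_le (p : V → ι) (hp : ∀ x y, A x y → p x = p y ∨ B (p x) (p y))
    {x y : V} {m : ℕ} (hw : HasDWalk A x y m) : ∃ m' ≤ m, HasDWalk B (p x) (p y) m' := by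
  induction m generalizing x with
  | zero => exact ⟨0, le_rfl, hasDWalk_zero_iff.mpr (congrArg p (hasDWalk_zero_iff.mp hw))⟩
  | succ m ih =>
    obtain ⟨z, hxz, hzy⟩ := hasDWalk_succ_iff.mp hw
    obtain ⟨m', hm', hw'⟩ := ih hzy
    rcases hp x z hxz with hpxz | hpxz
    · exact ⟨m', by omega, hpxz ▸ hw'⟩
    · exact ⟨m' + 1, by omega, hasDWalk_succ_iff.mpr ⟨p z, hpxz, hw'⟩⟩

theorem HasDWalk.lift_of_forall_mem {X : ι → Set V} (hne : ∀ i, (X i).Nonempty)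
    (hB : ∀ i j, B i j → ∀ x ∈ X i, ∀ y ∈ X j, A x y) {i j : ι} {m : ℕ}
    (hw : HasDWalk B i j (m + 1)) {u v : V} (hu : u ∈ X i) (hv : v ∈ X j) :
    HasDWalk A u v (m + 1) := by
  induction m generalizing i u with
  | zero =>
    obtain ⟨k, hik, hkj⟩ := hasDWalk_succ_iff.mp hw
    obtain rfl := hasDWalk_zero_iff.mp hkj
    exact hasDWalk_succ_iff.mpr ⟨v, hB i k hik u hu v hv, hasDWalk_zero_iff.mpr rfl⟩
  | succ m ih =>
    obtain ⟨k, hik, hkj⟩ := hasDWalk_succ_iff.mp hw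
    obtain ⟨w, hwk⟩ := hne k
    exact hasDWalk_succ_iff.mpr ⟨w, hB i k hik u hu w hwk, ih hkj hwk⟩

end Lifting

theorem IsModule.adj_of_adj {A : V → V → Prop} {X Y : Set V} (hX : IsModule A X)
    (hY : IsModule A Y) (hXY : Disjoint X Y) {a b x y : V} (ha : a ∈ X) (hb : b ∈ Y)
    (hx : x ∈ X) (hy : y ∈ Y) (hab : A a b) : A x y :=
  (hX y (hXY.notMem_of_mem_right hy) a ha x hx).2.mp
    ((hY a (hXY.notMem_of_mem_left ha) b hb y hy).1.mp hab)

namespace IsFactorization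

variable {ι : Type*} {A : V → V → Prop} {X : ι → Set V}

theorem exists_index (hX : IsFactorization A X) : ∃ p : V → ι, ∀ v i, v ∈ X i ↔ p v = i := by
  have hcover (v : V) : ∃ i, v ∈ X i := Set.mem_iUnion.mp (hX.2.2.1 ▸ Set.mem_univ v)
  choose p hp using hcover
  refine ⟨p, fun v i => ⟨fun hv => ?_, fun h => h ▸ hp v⟩⟩
  by_contra hne
  exact (hX.2.1 hne).notMem_of_mem_left (hp v) hv

theorem exists_mem (hX : IsFactorization A X) (v : V) : ∃ i, v ∈ X i :=
  let ⟨p, hp⟩ := hX.exists_index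
  ⟨p v, (hp v _).mpr rfl⟩

theorem adj_of_quotientAdj (hX : IsFactorization A X) {i j : ι} (hij : quotientAdj A X i j)
    {x y : V} (hx : x ∈ X i) (hy : y ∈ X j) : A x y :=
  let ⟨hne, _, ha, _, hb, hab⟩ := hij
  (hX.2.2.2 i).adj_of_adj (hX.2.2.2 j) (hX.2.1 hne) ha hb hx hy hab

theorem exists_hasDWalk_quotient_le (hX : IsFactorization A X) {u v : V} {m : ℕ}
    (hw : HasDWalk A u v m) {i j : ι} (hu : u ∈ X i) (hv : v ∈ X j) :
    ∃ m' ≤ m, HasDWalk (quotientAdj A X) i j m' := by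
  obtain ⟨p, hp⟩ := hX.exists_index
  obtain ⟨rfl, rfl⟩ : p u = i ∧ p v = j := ⟨(hp u i).mp hu, (hp v j).mp hv⟩
  refine hw.exists_map_le p fun x y hxy => or_iff_not_imp_left.mpr fun hne => ?_
  exact ⟨hne, x, (hp x _).mpr rfl, y, (hp y _).mpr rfl, hxy⟩

theorem hasDWalk_of_hasDWalk_quotient (hX : IsFactorization A X) {i j : ι} (hij : i ≠ j)
    {m : ℕ} (hw : HasDWalk (quotientAdj A X) i j m) {u v : V} (hu : u ∈ X i) (hv : v ∈ X j) :
    HasDWalk A u v m := by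
  cases m with
  | zero => exact absurd (hasDWalk_zero_iff.mp hw) hij
  | succ m =>
    exact hw.lift_of_forall_mem hX.1 (fun _ _ h _ hx _ hy => hX.adj_of_quotientAdj h hx hy) hu hv

theorem ddist_quotientAdj (hX : IsFactorization A X) {i j : ι} (hij : i ≠ j) {u v : V}
    (hu : u ∈ X i) (hv : v ∈ X j) : ddist (quotientAdj A X) i j = ddist A u v :=
  le_antisymm
    (ddist_le_ddist_of_forall_hasDWalk fun _ hw => hX.exists_hasDWalk_quotient_le hw hu hv)
    (ddist_le_ddist_of_forall_hasDWalk fun m hw =>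
      ⟨m, le_rfl, hX.hasDWalk_of_hasDWalk_quotient hij hw hu hv⟩)

end IsFactorization

/-- the modules meeting a resolving set form a resolving set of the quotient. -/
theorem quotient_resolving_set {ι : Type*}
    (A : V → V → Prop) (X : ι → Set V) (hX : IsFactorization A X)
    (W : Set V) (hW : IsResolvingSet A W) :
    IsResolvingSet (quotientAdj A X) {i : ι | (W ∩ X i).Nonempty} := by
  refine ⟨fun j => ?_, fun i j hij => ?_⟩
  · obtain ⟨v, hv⟩ := hX.1 j
    obtain ⟨s, hs, m, hw⟩ := hW.1 v
    obtain ⟨k, hk⟩ := hX.exists_mem s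
    obtain ⟨m', -, hw'⟩ := hX.exists_hasDWalk_quotient_le hw hk hv
    exact ⟨k, ⟨s, hs, hk⟩, m', hw'⟩
  · obtain ⟨u, hu⟩ := hX.1 i
    obtain ⟨v, hv⟩ := hX.1 j
    have huv : u ≠ v := fun h => (hX.2.1 hij).notMem_of_mem_left hu (h ▸ hv)
    obtain ⟨s, hs, hsuv⟩ := hW.2 u v huv
    obtain ⟨k, hk⟩ := hX.exists_mem s
    refine ⟨k, ⟨s, hs, hk⟩, ?_⟩
    rcases eq_or_ne k i with rfl | hki
    · rw [ddist_eq_zero_iff.mpr rfl]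
      exact fun h => hij (ddist_eq_zero_iff.mp h.symm)
    rcases eq_or_ne k j with rfl | hkj
    · rw [ddist_eq_zero_iff.mpr rfl]
      exact fun h => hki (ddist_eq_zero_iff.mp h)
    rwa [hX.ddist_quotientAdj hki hk hu, hX.ddist_quotientAdj hkj hk hv]
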